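/- arXiv:1112.5187 — 6 statements merged into one kernel-verified Lean document; each statement's English description precedes it below -/
import Mathlib

section
/- Let n ∈ ℕ and let s ∈ T_n([0,1]) be given by s(x) = c_k for x ∈ I_k, with |c_k| = 1 for k = 1,…,n. If s is a generating function of the schlicht function f(z) = z + ∑_{k≥2} a_k z^k, then a_3 = a_2^2 - ∑_{k=1}^n ((2k-1)/n^2) c_k^2. -/
open MeasureTheory Filter Topology

noncomputable section

/-- The `n`-th Taylor coefficient of `f` at `0`. -/
def taylorCoeff (f : ℂ → ℂ) (n : ℕ) : ℂ := iteratedDeriv n f 0 / n.factorial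

/-- The class `S` of schlicht functions: holomorphic and injective on the open unit disk,
normalized by `f 0 = 0` and `f' 0 = 1`. -/
def Schlicht (f : ℂ → ℂ) : Prop :=
  DifferentiableOn ℂ f (Metric.ball 0 1) ∧ Set.InjOn f (Metric.ball 0 1) ∧
    f 0 = 0 ∧ deriv f 0 = 1

/-- `g` is the sequence of functions obtained from `μ` by the Löwner recursion:
`g 1 ≡ 1` and, for `n ≥ 2`,
`g n x = -∫₀ˣ ∑_{k=1}^{n-1} 2k t^(n-k-1) g k t (μ t)^(n-k) dt`. -/
def GenSeq (μ : ℝ → ℂ) (g : ℕ → ℝ → ℂ) : Prop :=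
  (∀ x : ℝ, g 1 x = 1) ∧
  ∀ n, 2 ≤ n → ∀ x : ℝ,
    g n x = -∫ t in (0:ℝ)..x,
      ∑ k ∈ Finset.Ico 1 n, (2 * k : ℂ) * (t : ℂ) ^ (n - k - 1) * g k t * (μ t) ^ (n - k)

/-- `μ : (0,1] → ℂ` (measurable, of modulus one) is a generating function of the
schlicht function `f` if the Löwner recursion applied to `μ` produces the Taylor
coefficients of `f`:  `g n 1 = a_n(f)` for all `n ≥ 2`. -/
def IsGeneratingFn (μ : ℝ → ℂ) (f : ℂ → ℂ) : Prop :=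
  AEMeasurable μ (volume.restrict (Set.Ioc (0:ℝ) 1)) ∧
  (∀ t ∈ Set.Ioc (0:ℝ) 1, ‖μ t‖ = 1) ∧
  ∃ g : ℕ → ℝ → ℂ, GenSeq μ g ∧ ∀ n, 2 ≤ n → g n 1 = taylorCoeff f n

/-- `s` belongs to the class `T_m([0,1])` of step functions with respect to the
equidistant partition `I_k = [(k-1)/m, k/m)`, `k = 1,…,m-1`, `I_m = [(m-1)/m, 1]`,
taking unimodular values `c_k` on `I_k`. -/
def MemT (m : ℕ) (s : ℝ → ℂ) : Prop :=
  ∃ c : ℕ → ℂ, (∀ k, 1 ≤ k → k ≤ m → ‖c k‖ = 1) ∧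
    (∀ k, 1 ≤ k → k ≤ m → ∀ x : ℝ, ((k : ℝ) - 1) / m ≤ x → x < (k : ℝ) / m → s x = c k) ∧
    s 1 = c m

/-- The coefficient vector `(a_2(f), …, a_n(f))`. -/
def coeffVec (n : ℕ) (f : ℂ → ℂ) : Fin (n - 1) → ℂ := fun i => taylorCoeff f (i + 2)

/-- The `n`-th coefficient region `V_n = {(a_2(f),…,a_n(f)) : f ∈ S}`. -/
def Vregion (n : ℕ) : Set (Fin (n - 1) → ℂ) := {a | ∃ f, Schlicht f ∧ a = coeffVec n f}

/-- The subset `V_n^m ⊆ V_n` of coefficient vectors of schlicht functions possessing a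
generating function in `T_m([0,1])`. -/
def VregionStep (n m : ℕ) : Set (Fin (n - 1) → ℂ) :=
  {a | ∃ f, Schlicht f ∧ (∃ s, MemT m s ∧ IsGeneratingFn s f) ∧ a = coeffVec n f}

/-- `γ` is the sequence of logarithmic coefficients of `f`, i.e.
`log (f z / z) = 2 ∑_{n≥1} γ_n z^n` on the unit disk (branch vanishing at `0`). -/
def IsLogCoeff (f : ℂ → ℂ) (γ : ℕ → ℂ) : Prop :=
  ∃ h : ℂ → ℂ, DifferentiableOn ℂ h (Metric.ball 0 1) ∧ h 0 = 0 ∧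
    (∀ z ∈ Metric.ball (0:ℂ) 1, f z = z * Complex.exp (h z)) ∧
    (∀ z ∈ Metric.ball (0:ℂ) 1, HasSum (fun n : ℕ => 2 * γ (n + 1) * z ^ (n + 1)) (h z))

/-- The class `T` of typically real holomorphic functions on the unit disk:
`Im z · Im (f z) ≥ 0`. -/
def TypicallyReal (f : ℂ → ℂ) : Prop :=
  DifferentiableOn ℂ f (Metric.ball 0 1) ∧
    ∀ z ∈ Metric.ball (0:ℂ) 1, 0 ≤ z.im * (f z).im

/-!
Writing `G` for the primitive of `μ`, Löwner's recursion gives `g₂ = -2G` and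
`g₃' = -(2tμ² + 4g₂μ)`. Since `(g₂²)' = -4g₂μ`, this integrates to
`a₃ = a₂² - ∫₀¹ 2tμ(t)² dt`. The fundamental theorem of calculus is only needed with right
derivatives, which exist because a step function in `T_n` is right-continuous on `[0,1)`.
On `I_k` the integrand is `2t c_k²`, whose integral is `(k² - (k-1)²)/n² · c_k²`.
-/

open Set

theorem intervalIntegral.integral_primitive_mul_eq_sq_div_two {𝕜 : Type*} [RCLike 𝕜]
    {μ : ℝ → 𝕜} {a b : ℝ} (hab : a ≤ b) (hμ : IntervalIntegrable μ volume a b)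
    (hright : ∀ t ∈ Ioo a b, ContinuousWithinAt μ (Ioi t) t) :
    ∫ t in a..b, (∫ u in a..t, μ u) * μ t = (∫ u in a..b, μ u) ^ 2 / 2 := by
  have hcont : ContinuousOn (fun t => ∫ u in a..t, μ u) (Icc a b) :=
    uIcc_of_le hab ▸ continuousOn_primitive_interval' hμ left_mem_uIcc
  have hderiv (t : ℝ) (ht : t ∈ Ioo a b) :
      HasDerivWithinAt (fun t => ∫ u in a..t, μ u) (μ t) (Ioi t) t := by
    have hmeas : StronglyMeasurableAtFilter μ (𝓝[>] t) :=
      AEStronglyMeasurable.stronglyMeasurableAtFilter_of_mem hμ.1.1 <|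
        mem_of_superset (Ioo_mem_nhdsGT ht.2)
          (Ioo_subset_Ioc_self.trans (Ioc_subset_Ioc_left ht.1.le))
    have hμt : IntervalIntegrable μ volume a t :=
      hμ.mono_set (uIcc_subset_uIcc_left (uIcc_of_le hab ▸ Ioo_subset_Icc_self ht))
    exact (intervalIntegral.integral_hasDerivWithinAt_right hμt hmeas (hright t ht)).mono
      Ioi_subset_Ici_self
  rw [intervalIntegral.integral_eq_sub_of_hasDeriv_right_of_le hab
    (f := fun t => (∫ u in a..t, μ u) ^ 2 / 2) ((hcont.pow 2).div_const 2)
    (fun t ht => (((hderiv t ht).fun_pow 2).div_const 2).congr_deriv (by push_cast; ring))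
    (hμ.continuousOn_mul (uIcc_of_le hab ▸ hcont))]
  simp

section GenSeq

variable {μ : ℝ → ℂ} {g : ℕ → ℝ → ℂ}

theorem GenSeq.two_eq (hg : GenSeq μ g) (x : ℝ) : g 2 x = -2 * ∫ t in 0..x, μ t := by
  rw [hg.2 2 le_rfl x, neg_mul, ← intervalIntegral.integral_const_mul]
  simp [hg.1]

theorem GenSeq.three_eq (hg : GenSeq μ g) (x : ℝ) :
    g 3 x = -∫ t in 0..x, (2 * (t : ℂ) * μ t ^ 2 + 4 * g 2 t * μ t) := by
  rw [hg.2 3 (by norm_num) x]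
  congr 1
  refine intervalIntegral.integral_congr fun t _ => ?_
  rw [show Finset.Ico 1 3 = {1, 2} from rfl, Finset.sum_pair (by norm_num), hg.1]
  norm_num

theorem GenSeq.three_eq_sq_sub (hg : GenSeq μ g) {x : ℝ} (hx : 0 ≤ x)
    (hμ : IntervalIntegrable μ volume 0 x)
    (hμ2 : IntervalIntegrable (fun t => 2 * (t : ℂ) * μ t ^ 2) volume 0 x)
    (hright : ∀ t ∈ Ioo 0 x, ContinuousWithinAt μ (Ioi t) t) :
    g 3 x = g 2 x ^ 2 - ∫ t in 0..x, 2 * (t : ℂ) * μ t ^ 2 := by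
  have hg2 : g 2 = fun t => -2 * ∫ u in 0..t, μ u := funext hg.two_eq
  have hcross : ∫ t in 0..x, 4 * g 2 t * μ t = -4 * (∫ u in 0..x, μ u) ^ 2 := by
    simp_rw [hg2, show ∀ t, 4 * (-2 * ∫ u in 0..t, μ u) * μ t =
      -8 * ((∫ u in 0..t, μ u) * μ t) from fun t => by ring]
    rw [intervalIntegral.integral_const_mul,
      intervalIntegral.integral_primitive_mul_eq_sq_div_two hx hμ hright]
    ring
  have hcross_int : IntervalIntegrable (fun t => 4 * g 2 t * μ t) volume 0 x :=
    hμ.continuousOn_mul <| hg2 ▸ continuousOn_const.mul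
      (continuousOn_const.mul (intervalIntegral.continuousOn_primitive_interval' hμ left_mem_uIcc))
  rw [hg.three_eq, intervalIntegral.integral_add hμ2 hcross_int, hcross, hg.two_eq]
  ring

end GenSeq

theorem intervalIntegrable_of_norm_le {E : Type*} [NormedAddCommGroup E] {f : ℝ → E}
    {a b C : ℝ} (hab : a ≤ b) (hf : AEStronglyMeasurable f (volume.restrict (Ioc a b)))
    (hC : ∀ t ∈ Ioc a b, ‖f t‖ ≤ C) : IntervalIntegrable f volume a b :=
  (intervalIntegrable_iff_integrableOn_Ioc_of_le hab).2 <| IntegrableOn.of_bound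
    measure_Ioc_lt_top hf C ((ae_restrict_iff' measurableSet_Ioc).2 (ae_of_all _ hC))

section Step

variable {n : ℕ} {μ : ℝ → ℂ} {c : ℕ → ℂ}

theorem continuousWithinAt_Ioi_of_eqOn_Ico (hn : 0 < n)
    (h : ∀ k < n, EqOn μ (fun _ => c (k + 1)) (Ico (k / n : ℝ) ((k + 1) / n)))
    {t : ℝ} (ht : t ∈ Ico (0 : ℝ) 1) : ContinuousWithinAt μ (Ioi t) t := by
  have hn' : (0 : ℝ) < n := Nat.cast_pos.2 hn
  have htn : 0 ≤ t * n := mul_nonneg ht.1 hn'.le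
  set k := ⌊t * n⌋₊
  have hk : k < n := (Nat.floor_lt htn).2 (by nlinarith [ht.2])
  have hmem : t ∈ Ico (k / n : ℝ) ((k + 1) / n) :=
    ⟨(div_le_iff₀ hn').2 (Nat.floor_le htn), (lt_div_iff₀ hn').2 (Nat.lt_floor_add_one _)⟩
  refine continuousWithinAt_const.congr_of_eventuallyEq ?_ (h k hk hmem)
  filter_upwards [Ioo_mem_nhdsGT hmem.2] with u hu
  exact h k hk ⟨hmem.1.trans hu.1.le, hu.2⟩

theorem integral_two_mul_sq_of_eqOn_Ico (hn : 0 < n)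
    (h : ∀ k < n, EqOn μ (fun _ => c (k + 1)) (Ico (k / n : ℝ) ((k + 1) / n))) :
    ∫ t in 0..1, 2 * (t : ℂ) * μ t ^ 2 =
      ∑ k ∈ Finset.Icc 1 n, ((2 * (k : ℂ) - 1) / (n : ℂ) ^ 2) * (c k) ^ 2 := by
  have hn' : (0 : ℝ) < n := Nat.cast_pos.2 hn
  have hle (k : ℕ) : (k / n : ℝ) ≤ (k + 1) / n := by gcongr; simp
  have hpiece (k : ℕ) (hk : k < n) : EqOn (fun t : ℝ => 2 * (t : ℂ) * μ t ^ 2)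
      (fun t : ℝ => c (k + 1) ^ 2 * (2 * (t : ℂ))) (Ioo (k / n) ((k + 1) / n)) := fun t ht => by
    simp only [h k hk (Ioo_subset_Ico_self ht)]; ring
  have hint (k : ℕ) (hk : k < n) : IntervalIntegrable (fun t : ℝ => 2 * (t : ℂ) * μ t ^ 2)
      volume ((k : ℕ) / n : ℝ) ((k + 1 : ℕ) / n : ℝ) := by
    rw [Nat.cast_succ, intervalIntegrable_congr_uIoo (uIoo_of_le (hle k) ▸ hpiece k hk)]
    exact Continuous.intervalIntegrable (by fun_prop) ..
  have hval (k : ℕ) (hk : k < n) :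
      ∫ t in (k / n : ℝ)..((k + 1 : ℕ) / n : ℝ), 2 * (t : ℂ) * μ t ^ 2 =
        ((2 * ((k + 1 : ℕ) : ℂ) - 1) / (n : ℂ) ^ 2) * (c (k + 1)) ^ 2 := by
    rw [Nat.cast_succ, intervalIntegral.integral_congr_Ioo_of_le (hle k) (hpiece k hk),
      intervalIntegral.integral_const_mul, intervalIntegral.integral_const_mul,
      intervalIntegral.integral_ofReal, integral_id]
    push_cast
    field_simp
    ring
  have h0 : ((0 : ℕ) / n : ℝ) = 0 := by simp
  have h1 : ((n : ℕ) / n : ℝ) = 1 := div_self hn'.ne'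
  rw [← h0, ← h1, ← intervalIntegral.sum_integral_adjacent_intervals hint,
    Finset.sum_congr rfl fun k hk => hval k (Finset.mem_range.1 hk), Finset.range_eq_Ico,
    Finset.sum_Ico_add' (fun k : ℕ => ((2 * (k : ℂ) - 1) / (n : ℂ) ^ 2) * (c k) ^ 2),
    zero_add, Finset.Ico_add_one_right_eq_Icc]

end Step

theorem third_coeff_of_step_general (n : ℕ) (hn : 1 ≤ n) (c : ℕ → ℂ)
    (s : ℝ → ℂ)
    (hstep : ∀ k, 1 ≤ k → k ≤ n → ∀ x : ℝ, ((k : ℝ) - 1) / n ≤ x → x < (k : ℝ) / n → s x = c k)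
    (f : ℂ → ℂ) (hgen : IsGeneratingFn s f) :
    taylorCoeff f 3 = (taylorCoeff f 2) ^ 2 -
      ∑ k ∈ Finset.Icc 1 n, ((2 * (k : ℂ) - 1) / (n : ℂ) ^ 2) * (c k) ^ 2 := by
  obtain ⟨hmeas, hnorm, g, hg, hcoeff⟩ := hgen
  have hconst : ∀ k < n, EqOn s (fun _ => c (k + 1)) (Ico (k / n : ℝ) ((k + 1) / n)) :=
    fun k hk x hx => hstep (k + 1) (by omega) (by omega) x
      (by push_cast; simpa using hx.1) (by push_cast; exact hx.2)
  have hs : IntervalIntegrable s volume 0 1 :=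
    intervalIntegrable_of_norm_le zero_le_one hmeas.aestronglyMeasurable
      fun t ht => (hnorm t ht).le
  have hs2 : IntervalIntegrable (fun t : ℝ => 2 * (t : ℂ) * s t ^ 2) volume 0 1 :=
    intervalIntegrable_of_norm_le (C := 2) zero_le_one (by fun_prop) fun t ht => by
      simpa [hnorm t ht, abs_of_pos ht.1] using ht.2
  rw [← hcoeff 3 (by norm_num), ← hcoeff 2 le_rfl,
    hg.three_eq_sq_sub zero_le_one hs hs2
      fun t ht => continuousWithinAt_Ioi_of_eqOn_Ico hn hconst (Ioo_subset_Ico_self ht),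
    integral_two_mul_sq_of_eqOn_Ico hn hconst]

/-- **Lemma 1, formula (19).** If the step function `s ∈ T_n([0,1])` with values
`c_1, …, c_n` generates the schlicht function `f`, then
`a_3 = a_2² - ∑_{k=1}^n ((2k-1)/n²) c_k²`. -/
theorem third_coeff_of_step (n : ℕ) (hn : 1 ≤ n) (c : ℕ → ℂ)
    (hc : ∀ k, 1 ≤ k → k ≤ n → ‖c k‖ = 1)
    (s : ℝ → ℂ)
    (hstep : ∀ k, 1 ≤ k → k ≤ n → ∀ x : ℝ, ((k : ℝ) - 1) / n ≤ x → x < (k : ℝ) / n → s x = c k)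
    (hs1 : s 1 = c n)
    (f : ℂ → ℂ) (hf : Schlicht f) (hgen : IsGeneratingFn s f) :
    taylorCoeff f 3 = (taylorCoeff f 2) ^ 2 -
      ∑ k ∈ Finset.Icc 1 n, ((2 * (k : ℂ) - 1) / (n : ℂ) ^ 2) * (c k) ^ 2 :=
  third_coeff_of_step_general n hn c s hstep f hgen

end
end

section
/- Let n ∈ ℕ and let s ∈ T_n([0,1]) be given by s(x) = c_k for x ∈ I_k, with |c_k| = 1 for k = 1,…,n, and set c_0 = 0. If s is a generating function of the schlicht function f(z) = z + ∑_{k≥2} a_k z^k, then a_4 = 3 a_2 a_3 - 2 a_2^3 - (2/n^3) ∑_{k=1}^n c_k^2 { k^2 c_k + (2k-1) ∑_{j=0}^{k-1} c_j }. -/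
open MeasureTheory Filter Topology

noncomputable section

/-!
Write `A x = ∫₀ˣ μ` and `B x = ∫₀ˣ t μ(t)² dt`. The Löwner recursion gives `g₂ = -2A` and
`g₃ = -2B + 4A²`; integrating `A²μ = (A³/3)'` and `Bμ = (AB)' - tAμ²` then gives
`g₄(1) = -2∫₀¹ t²μ³ - 4∫₀¹ tAμ² + 12A(1)B(1) - 8A(1)³`. Hence
`a₄ - 3a₂a₃ + 2a₂³ = -2∫₀¹ t²μ³ - 4∫₀¹ tAμ²`. Integrating by parts like this only needs `μ` to
be bounded, measurable and right-continuous, so that `A` and `B` have right derivatives at every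
point of `[0,1)`. For a step function, `A` is affine on each interval `I_k` and takes the value
`(c₀ + ⋯ + c_{k-1})/n` at its left end, so both remaining integrals are sums of integrals of
polynomials.
-/

open Set intervalIntegral

def primitive (f : ℝ → ℂ) (x : ℝ) : ℂ := ∫ t in (0:ℝ)..x, f t

@[simp] lemma primitive_zero (f : ℝ → ℂ) : primitive f 0 = 0 := integral_same

lemma continuousOn_primitive {f : ℝ → ℂ} (hf : IntervalIntegrable f volume 0 1) :
    ContinuousOn (primitive f) (Icc 0 1) := by
  have h := continuousOn_primitive_interval' hf left_mem_uIcc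
  rw [uIcc_of_le zero_le_one] at h
  exact h

lemma hasDerivWithinAt_primitive {f : ℝ → ℂ} (hf : IntervalIntegrable f volume 0 1)
    (hfm : AEStronglyMeasurable f (volume.restrict (Ioc 0 1))) {t : ℝ} (ht : t ∈ Ico (0:ℝ) 1)
    (hft : ContinuousWithinAt f (Ici t) t) :
    HasDerivWithinAt (primitive f) (f t) (Ici t) t := by
  have hmeas : StronglyMeasurableAtFilter f (𝓝[>] t) :=
    ⟨Ioc 0 1, mem_of_superset (Ioc_mem_nhdsGT ht.2) (Ioc_subset_Ioc_left ht.1), hfm⟩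
  refine integral_hasDerivWithinAt_right (hf.mono_set ?_) hmeas (hft.mono Ioi_subset_Ici_self)
  rw [uIcc_of_le zero_le_one]
  exact uIcc_subset_Icc unitInterval.zero_mem ⟨ht.1, ht.2.le⟩

section

variable {μ : ℝ → ℂ} {C : ℝ}

lemma intervalIntegrable_mul_pow (hm : AEStronglyMeasurable μ (volume.restrict (Ioc 0 1)))
    (hC : ∀ t ∈ Ioc (0:ℝ) 1, ‖μ t‖ ≤ C) {φ : ℝ → ℂ} (hφ : ContinuousOn φ (Icc 0 1)) (m : ℕ)
    {a b : ℝ} (ha : a ∈ Icc (0:ℝ) 1) (hb : b ∈ Icc (0:ℝ) 1) :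
    IntervalIntegrable (fun t => φ t * μ t ^ m) volume a b := by
  have h01 : IntervalIntegrable (fun t => φ t * μ t ^ m) volume 0 1 := by
    rw [intervalIntegrable_iff_integrableOn_Ioc_of_le zero_le_one]
    refine Integrable.mul_bdd (c := C ^ m) ((hφ.integrableOn_Icc).mono_set Ioc_subset_Icc_self)
      (hm.pow m) (ae_restrict_of_forall_mem measurableSet_Ioc fun t ht => ?_)
    rw [norm_pow]
    exact pow_le_pow_left₀ (norm_nonneg _) (hC t ht) m
  refine h01.mono_set ?_
  rw [uIcc_of_le zero_le_one]
  exact uIcc_subset_Icc ha hb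

lemma intervalIntegrable_of_norm_le_s4 (hm : AEStronglyMeasurable μ (volume.restrict (Ioc 0 1)))
    (hC : ∀ t ∈ Ioc (0:ℝ) 1, ‖μ t‖ ≤ C) : IntervalIntegrable μ volume 0 1 := by
  simpa using intervalIntegrable_mul_pow (φ := 1) hm hC continuousOn_const 1
    unitInterval.zero_mem unitInterval.one_mem

lemma continuousOn_primitive_of_norm_le
    (hm : AEStronglyMeasurable μ (volume.restrict (Ioc 0 1)))
    (hC : ∀ t ∈ Ioc (0:ℝ) 1, ‖μ t‖ ≤ C) : ContinuousOn (primitive μ) (Icc 0 1) :=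
  continuousOn_primitive (intervalIntegrable_of_norm_le_s4 hm hC)

lemma hasDerivWithinAt_primitive_mul_pow
    (hm : AEStronglyMeasurable μ (volume.restrict (Ioc 0 1)))
    (hC : ∀ t ∈ Ioc (0:ℝ) 1, ‖μ t‖ ≤ C) (hr : ∀ t ∈ Ico (0:ℝ) 1, ContinuousWithinAt μ (Ici t) t)
    {φ : ℝ → ℂ} (hφ : Continuous φ) (m : ℕ) {t : ℝ} (ht : t ∈ Ico (0:ℝ) 1) :
    HasDerivWithinAt (primitive fun t => φ t * μ t ^ m) (φ t * μ t ^ m) (Ici t) t :=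
  hasDerivWithinAt_primitive
    (intervalIntegrable_mul_pow hm hC hφ.continuousOn m unitInterval.zero_mem
      unitInterval.one_mem)
    (hφ.aestronglyMeasurable.mul (hm.pow m)) ht (hφ.continuousWithinAt.mul ((hr t ht).pow m))

lemma hasDerivWithinAt_primitive_self (hm : AEStronglyMeasurable μ (volume.restrict (Ioc 0 1)))
    (hC : ∀ t ∈ Ioc (0:ℝ) 1, ‖μ t‖ ≤ C) (hr : ∀ t ∈ Ico (0:ℝ) 1, ContinuousWithinAt μ (Ici t) t)
    {t : ℝ} (ht : t ∈ Ico (0:ℝ) 1) : HasDerivWithinAt (primitive μ) (μ t) (Ici t) t := by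
  simpa using hasDerivWithinAt_primitive_mul_pow (φ := 1) hm hC hr continuous_const 1 ht

lemma integral_primitive_pow_mul (hm : AEStronglyMeasurable μ (volume.restrict (Ioc 0 1)))
    (hC : ∀ t ∈ Ioc (0:ℝ) 1, ‖μ t‖ ≤ C) (hr : ∀ t ∈ Ico (0:ℝ) 1, ContinuousWithinAt μ (Ici t) t)
    (m : ℕ) {x : ℝ} (hx : x ∈ Icc (0:ℝ) 1) :
    ∫ t in (0:ℝ)..x, primitive μ t ^ m * μ t = primitive μ x ^ (m + 1) / (m + 1) := by
  have hA := continuousOn_primitive_of_norm_le hm hC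
  have hderiv : ∀ t ∈ Ioo 0 x, HasDerivWithinAt (fun y => primitive μ y ^ (m + 1) / (m + 1))
      (primitive μ t ^ m * μ t) (Ioi t) t := by
    intro t ht
    have h := ((hasDerivWithinAt_primitive_self hm hC hr ⟨ht.1.le, ht.2.trans_le hx.2⟩).mono
      Ioi_subset_Ici_self).fun_pow (m + 1) |>.div_const ((m : ℂ) + 1)
    refine h.congr_deriv ?_
    rw [Nat.add_sub_cancel]
    push_cast
    field_simp
  rw [integral_eq_sub_of_hasDeriv_right_of_le hx.1
    ((hA.mono (Icc_subset_Icc_right hx.2)).pow (m + 1) |>.div_const _) hderiv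
    (by simpa using intervalIntegrable_mul_pow hm hC (hA.pow m) 1 unitInterval.zero_mem hx)]
  simp

lemma integral_primitive_mul_sq_mul (hm : AEStronglyMeasurable μ (volume.restrict (Ioc 0 1)))
    (hC : ∀ t ∈ Ioc (0:ℝ) 1, ‖μ t‖ ≤ C) (hr : ∀ t ∈ Ico (0:ℝ) 1, ContinuousWithinAt μ (Ici t) t) :
    ∫ t in (0:ℝ)..1, primitive (fun t => (t:ℂ) * μ t ^ 2) t * μ t =
      primitive μ 1 * primitive (fun t => (t:ℂ) * μ t ^ 2) 1 -
        ∫ t in (0:ℝ)..1, (t:ℂ) * primitive μ t * μ t ^ 2 := by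
  have h0 := unitInterval.zero_mem
  have h1 := unitInterval.one_mem
  have hμ := intervalIntegrable_of_norm_le_s4 hm hC
  have htμ := intervalIntegrable_mul_pow hm hC Complex.continuous_ofReal.continuousOn 2 h0 h1
  have hA := continuousOn_primitive hμ
  have hB := continuousOn_primitive htμ
  have hμB : IntervalIntegrable (fun t => μ t * primitive (fun t => (t:ℂ) * μ t ^ 2) t)
      volume 0 1 := by
    simpa [mul_comm] using intervalIntegrable_mul_pow hm hC hB 1 h0 h1
  have hAtμ : IntervalIntegrable (fun t => primitive μ t * ((t:ℂ) * μ t ^ 2)) volume 0 1 := by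
    simpa [mul_assoc] using
      intervalIntegrable_mul_pow hm hC (hA.mul Complex.continuous_ofReal.continuousOn) 2 h0 h1
  have hparts := integral_deriv_mul_eq_sub_of_hasDeriv_right (u := primitive μ)
    (v := primitive fun t => (t:ℂ) * μ t ^ 2) (by simpa [uIcc_of_le zero_le_one] using hA)
    (by simpa [uIcc_of_le zero_le_one] using hB)
    (fun t ht => by
      simp only [zero_le_one, min_eq_left, max_eq_right] at ht
      exact (hasDerivWithinAt_primitive_self hm hC hr ⟨ht.1.le, ht.2⟩).mono Ioi_subset_Ici_self)
    (fun t ht => by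
      simp only [zero_le_one, min_eq_left, max_eq_right] at ht
      exact (hasDerivWithinAt_primitive_mul_pow hm hC hr Complex.continuous_ofReal 2
        ⟨ht.1.le, ht.2⟩).mono Ioi_subset_Ici_self) hμ htμ
  have hcomm : ∫ t in (0:ℝ)..1, primitive μ t * ((t:ℂ) * μ t ^ 2) =
      ∫ t in (0:ℝ)..1, (t:ℂ) * primitive μ t * μ t ^ 2 :=
    integral_congr fun t _ => by ring
  rw [intervalIntegral.integral_add hμB hAtμ, hcomm,
    integral_congr fun t _ => mul_comm (μ t) (primitive (fun t => (t:ℂ) * μ t ^ 2) t)] at hparts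
  simp only [primitive_zero, mul_zero, sub_zero] at hparts
  linear_combination hparts

namespace GenSeq

variable {g : ℕ → ℝ → ℂ}

lemma apply_two (hg : GenSeq μ g) (x : ℝ) : g 2 x = -2 * primitive μ x := by
  rw [hg.2 2 le_rfl x]
  norm_num [Finset.sum_Ico_eq_sum_range, hg.1, primitive]

lemma apply_three (hg : GenSeq μ g) (hm : AEStronglyMeasurable μ (volume.restrict (Ioc 0 1)))
    (hC : ∀ t ∈ Ioc (0:ℝ) 1, ‖μ t‖ ≤ C) (hr : ∀ t ∈ Ico (0:ℝ) 1, ContinuousWithinAt μ (Ici t) t)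
    {x : ℝ} (hx : x ∈ Icc (0:ℝ) 1) :
    g 3 x = -2 * primitive (fun t => (t:ℂ) * μ t ^ 2) x + 4 * primitive μ x ^ 2 := by
  have htμ := intervalIntegrable_mul_pow hm hC Complex.continuous_ofReal.continuousOn 2
    unitInterval.zero_mem hx
  have hAμ : IntervalIntegrable (fun t => primitive μ t ^ 1 * μ t) volume 0 x := by
    simpa using intervalIntegrable_mul_pow hm hC (continuousOn_primitive_of_norm_le hm hC) 1
      unitInterval.zero_mem hx
  rw [hg.2 3 (by norm_num) x, integral_congr (g := fun t : ℝ =>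
      2 * ((t:ℂ) * μ t ^ 2) - 8 * (primitive μ t ^ 1 * μ t)) fun t _ => by
    simp only [Finset.sum_Ico_eq_sum_range, Finset.sum_range_succ, Finset.sum_range_zero, hg.1,
      hg.apply_two, Nat.reduceAdd, Nat.reduceSub]
    push_cast
    ring,
    intervalIntegral.integral_sub (htμ.const_mul 2) (hAμ.const_mul 8),
    intervalIntegral.integral_const_mul, intervalIntegral.integral_const_mul,
    integral_primitive_pow_mul hm hC hr 1 hx]
  simp only [primitive]
  ring

lemma apply_four_one_eq (hg : GenSeq μ g)
    (hm : AEStronglyMeasurable μ (volume.restrict (Ioc 0 1)))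
    (hC : ∀ t ∈ Ioc (0:ℝ) 1, ‖μ t‖ ≤ C) (hr : ∀ t ∈ Ico (0:ℝ) 1, ContinuousWithinAt μ (Ici t) t) :
    g 4 1 = -(2 * (∫ t in (0:ℝ)..1, (t:ℂ) ^ 2 * μ t ^ 3)
      - 8 * (∫ t in (0:ℝ)..1, (t:ℂ) * primitive μ t * μ t ^ 2)
      - 12 * (∫ t in (0:ℝ)..1, primitive (fun t => (t:ℂ) * μ t ^ 2) t * μ t)
      + 24 * (∫ t in (0:ℝ)..1, primitive μ t ^ 2 * μ t)) := by
  have h0 := unitInterval.zero_mem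
  have h1 := unitInterval.one_mem
  have hA := continuousOn_primitive_of_norm_le hm hC
  have ht2μ3 : IntervalIntegrable (fun t : ℝ => (t:ℂ) ^ 2 * μ t ^ 3) volume 0 1 :=
    intervalIntegrable_mul_pow hm hC (by fun_prop) 3 h0 h1
  have htAμ2 : IntervalIntegrable (fun t : ℝ => (t:ℂ) * primitive μ t * μ t ^ 2) volume 0 1 :=
    intervalIntegrable_mul_pow hm hC (Complex.continuous_ofReal.continuousOn.mul hA) 2 h0 h1
  have hBμ : IntervalIntegrable (fun t => primitive (fun t => (t:ℂ) * μ t ^ 2) t * μ t)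
      volume 0 1 := by
    simpa using intervalIntegrable_mul_pow hm hC (continuousOn_primitive
      (intervalIntegrable_mul_pow hm hC Complex.continuous_ofReal.continuousOn 2 h0 h1)) 1 h0 h1
  have hA2μ : IntervalIntegrable (fun t => primitive μ t ^ 2 * μ t) volume 0 1 := by
    simpa using intervalIntegrable_mul_pow hm hC (hA.pow 2) 1 h0 h1
  rw [hg.2 4 (by norm_num) 1, integral_congr (g := fun t : ℝ =>
      2 * ((t:ℂ) ^ 2 * μ t ^ 3) - 8 * ((t:ℂ) * primitive μ t * μ t ^ 2)
        - 12 * (primitive (fun t => (t:ℂ) * μ t ^ 2) t * μ t) + 24 * (primitive μ t ^ 2 * μ t))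
      fun t ht => by
    rw [uIcc_of_le zero_le_one] at ht
    simp only [Finset.sum_Ico_eq_sum_range, Finset.sum_range_succ, Finset.sum_range_zero, hg.1,
      hg.apply_two, hg.apply_three hm hC hr ht, Nat.reduceAdd, Nat.reduceSub]
    push_cast
    ring,
    intervalIntegral.integral_add (((ht2μ3.const_mul 2).sub (htAμ2.const_mul 8)).sub
      (hBμ.const_mul 12)) (hA2μ.const_mul 24),
    intervalIntegral.integral_sub ((ht2μ3.const_mul 2).sub (htAμ2.const_mul 8))
      (hBμ.const_mul 12),
    intervalIntegral.integral_sub (ht2μ3.const_mul 2) (htAμ2.const_mul 8)]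
  simp only [intervalIntegral.integral_const_mul]

lemma apply_four_one (hg : GenSeq μ g) (hm : AEStronglyMeasurable μ (volume.restrict (Ioc 0 1)))
    (hC : ∀ t ∈ Ioc (0:ℝ) 1, ‖μ t‖ ≤ C) (hr : ∀ t ∈ Ico (0:ℝ) 1, ContinuousWithinAt μ (Ici t) t) :
    g 4 1 = -2 * (∫ t in (0:ℝ)..1, (t:ℂ) ^ 2 * μ t ^ 3)
      - 4 * (∫ t in (0:ℝ)..1, (t:ℂ) * primitive μ t * μ t ^ 2)
      + 12 * primitive μ 1 * primitive (fun t => (t:ℂ) * μ t ^ 2) 1 - 8 * primitive μ 1 ^ 3 := by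
  rw [hg.apply_four_one_eq hm hC hr, integral_primitive_pow_mul hm hC hr 2 unitInterval.one_mem,
    integral_primitive_mul_sq_mul hm hC hr]
  ring

end GenSeq

theorem taylorCoeff_four_of_isGeneratingFn {f : ℂ → ℂ} (hμ : IsGeneratingFn μ f)
    (hr : ∀ t ∈ Ico (0:ℝ) 1, ContinuousWithinAt μ (Ici t) t) :
    taylorCoeff f 4 = 3 * taylorCoeff f 2 * taylorCoeff f 3 - 2 * taylorCoeff f 2 ^ 3 -
      (2 * (∫ t in (0:ℝ)..1, (t:ℂ) ^ 2 * μ t ^ 3)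
        + 4 * (∫ t in (0:ℝ)..1, (t:ℂ) * primitive μ t * μ t ^ 2)) := by
  obtain ⟨hm, hmod, g, hg, hcoeff⟩ := hμ
  have hC : ∀ t ∈ Ioc (0:ℝ) 1, ‖μ t‖ ≤ 1 := fun t ht => (hmod t ht).le
  rw [← hcoeff 2 le_rfl, ← hcoeff 3 (by norm_num), ← hcoeff 4 (by norm_num), hg.apply_two,
    hg.apply_three hm.aestronglyMeasurable hC hr unitInterval.one_mem,
    hg.apply_four_one hm.aestronglyMeasurable hC hr]
  ring

end

lemma integral_ofReal_pow (a b : ℝ) (k : ℕ) :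
    ∫ t in a..b, (t:ℂ) ^ k = ((b:ℂ) ^ (k + 1) - (a:ℂ) ^ (k + 1)) / (k + 1) := by
  simp_rw [← Complex.ofReal_pow]
  rw [intervalIntegral.integral_ofReal, integral_pow]
  push_cast
  ring

lemma intervalIntegrable_and_integral_of_eqOn_Ioo {f : ℝ → ℂ} {a b : ℝ} (hab : a ≤ b) {u w : ℂ}
    (hf : EqOn f (fun t => u * t + w * (t:ℂ) ^ 2) (Ioo a b)) :
    IntervalIntegrable f volume a b ∧
      ∫ t in a..b, f t = u * ((b:ℂ) ^ 2 - (a:ℂ) ^ 2) / 2 + w * ((b:ℂ) ^ 3 - (a:ℂ) ^ 3) / 3 := by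
  have hf' : EqOn (fun t : ℝ => u * t + w * (t:ℂ) ^ 2) f (uIoo a b) := by
    rw [uIoo_of_le hab]
    exact hf.symm
  have hlin : IntervalIntegrable (fun t : ℝ => u * t) volume a b :=
    (by fun_prop : Continuous fun t : ℝ => u * t).intervalIntegrable a b
  have hsq : IntervalIntegrable (fun t : ℝ => w * (t:ℂ) ^ 2) volume a b :=
    (by fun_prop : Continuous fun t : ℝ => w * (t:ℂ) ^ 2).intervalIntegrable a b
  refine ⟨(hlin.add hsq).congr_uIoo hf', ?_⟩
  have h1 := integral_ofReal_pow a b 1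
  simp only [pow_one] at h1
  rw [integral_congr_Ioo_of_le hab hf, intervalIntegral.integral_add hlin hsq,
    intervalIntegral.integral_const_mul, intervalIntegral.integral_const_mul, h1,
    integral_ofReal_pow]
  push_cast
  ring

def IsEquidistantStep (n : ℕ) (c : ℕ → ℂ) (s : ℝ → ℂ) : Prop :=
  ∀ i < n, ∀ x ∈ Ico ((i:ℝ) / n) ((i + 1) / n), s x = c (i + 1)

section Step

variable {n : ℕ}

lemma exists_mem_Ico_div (hn : 0 < n) {t : ℝ} (ht : t ∈ Ico (0:ℝ) 1) :
    ∃ i < n, t ∈ Ico ((i:ℝ) / n) ((i + 1) / n) := by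
  have hn' : (0:ℝ) < n := by exact_mod_cast hn
  have hnt : 0 ≤ (n:ℝ) * t := mul_nonneg hn'.le ht.1
  refine ⟨⌊(n:ℝ) * t⌋₊, ?_, ?_, ?_⟩
  · rw [Nat.floor_lt hnt]
    nlinarith [ht.2]
  · rw [div_le_iff₀ hn', mul_comm t]
    exact Nat.floor_le hnt
  · rw [lt_div_iff₀ hn', mul_comm]
    exact Nat.lt_floor_add_one _

lemma integral_zero_one_eq_sum (hn : 0 < n) {f : ℝ → ℂ}
    (hf : ∀ i < n, IntervalIntegrable f volume ((i:ℝ) / n) ((i + 1) / n)) :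
    ∫ t in (0:ℝ)..1, f t = ∑ i ∈ Finset.range n, ∫ t in ((i:ℝ) / n)..((i + 1) / n), f t := by
  have h := sum_integral_adjacent_intervals (a := fun k : ℕ => (k:ℝ) / n) (μ := volume)
    fun i hi => by simpa using hf i hi
  simp only [Nat.cast_succ, Nat.cast_zero, zero_div] at h
  rw [div_self (by exact_mod_cast hn.ne' : (n:ℝ) ≠ 0)] at h
  exact h.symm

variable {c : ℕ → ℂ} {s : ℝ → ℂ}

lemma IsEquidistantStep.continuousWithinAt_Ici (hs : IsEquidistantStep n c s) (hn : 0 < n)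
    {t : ℝ} (ht : t ∈ Ico (0:ℝ) 1) : ContinuousWithinAt s (Ici t) t := by
  obtain ⟨i, hi, hti⟩ := exists_mem_Ico_div hn ht
  refine continuousWithinAt_const.congr_of_eventuallyEq ?_ (hs i hi t hti)
  filter_upwards [Ico_mem_nhdsGE hti.2] with x hx
  exact hs i hi x ⟨hti.1.trans hx.1, hx.2⟩

lemma IsEquidistantStep.intervalIntegrable_and_integral (hs : IsEquidistantStep n c s)
    {i : ℕ} (hi : i < n) {t : ℝ} (ht : t ∈ Icc ((i:ℝ) / n) ((i + 1) / n)) :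
    IntervalIntegrable s volume ((i:ℝ) / n) t ∧
      ∫ x in ((i:ℝ) / n)..t, s x = c (i + 1) * ((t:ℂ) - i / n) := by
  have hs' : EqOn s (fun _ => c (i + 1)) (Ioo ((i:ℝ) / n) t) :=
    fun x hx => hs i hi x ⟨hx.1.le, hx.2.trans_le ht.2⟩
  refine ⟨(intervalIntegrable_const (c := c (i + 1))).congr_uIoo ?_, ?_⟩
  · rw [uIoo_of_le ht.1]
    exact hs'.symm
  · rw [integral_congr_Ioo_of_le ht.1 hs', intervalIntegral.integral_const, Complex.real_smul]
    push_cast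
    ring

lemma IsEquidistantStep.intervalIntegrable_and_integral_piece (hs : IsEquidistantStep n c s)
    {i : ℕ} (hi : i < n) :
    IntervalIntegrable s volume ((i:ℝ) / n) (((i + 1 : ℕ):ℝ) / n) ∧
      ∫ x in ((i:ℝ) / n)..(((i + 1 : ℕ):ℝ) / n), s x = c (i + 1) / n := by
  have hmem : ((i + 1 : ℕ):ℝ) / n ∈ Icc ((i:ℝ) / n) ((i + 1) / n) := by
    rw [Nat.cast_succ]
    exact right_mem_Icc.2 (by gcongr; linarith)
  obtain ⟨hint, heq⟩ := hs.intervalIntegrable_and_integral hi hmem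
  refine ⟨hint, ?_⟩
  rw [heq]
  push_cast
  ring

lemma IsEquidistantStep.primitive_div (hs : IsEquidistantStep n c s) {j : ℕ} (hj : j ≤ n) :
    primitive s ((j:ℝ) / n) = (∑ i ∈ Finset.range j, c (i + 1)) / n := by
  have h := sum_integral_adjacent_intervals (a := fun k : ℕ => (k:ℝ) / n) (μ := volume)
    fun i hi => (hs.intervalIntegrable_and_integral_piece (hi.trans_le hj)).1
  simp only [Nat.cast_zero, zero_div] at h
  rw [primitive, ← h, Finset.sum_div]
  exact Finset.sum_congr rfl fun i hi =>
    (hs.intervalIntegrable_and_integral_piece ((Finset.mem_range.1 hi).trans_le hj)).2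

lemma IsEquidistantStep.primitive_eq (hs : IsEquidistantStep n c s) {i : ℕ} (hi : i < n)
    {t : ℝ} (ht : t ∈ Icc ((i:ℝ) / n) ((i + 1) / n)) :
    primitive s t = (∑ j ∈ Finset.range i, c (j + 1)) / n + c (i + 1) * ((t:ℂ) - i / n) := by
  have h0 : IntervalIntegrable s volume 0 ((i:ℝ) / n) := by
    simpa using IntervalIntegrable.trans_iterate (a := fun k : ℕ => (k:ℝ) / n) (μ := volume)
      fun k hk => (hs.intervalIntegrable_and_integral_piece (hk.trans hi)).1
  obtain ⟨hint, heq⟩ := hs.intervalIntegrable_and_integral hi ht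
  rw [← hs.primitive_div hi.le, ← heq, primitive, primitive,
    integral_add_adjacent_intervals h0 hint]

lemma IsEquidistantStep.two_mul_integral_add_four_mul_integral (hs : IsEquidistantStep n c s)
    (hn : 0 < n) (hc0 : c 0 = 0) :
    2 * (∫ t in (0:ℝ)..1, (t:ℂ) ^ 2 * s t ^ 3)
      + 4 * (∫ t in (0:ℝ)..1, (t:ℂ) * primitive s t * s t ^ 2) =
      (2 / (n:ℂ) ^ 3) * ∑ k ∈ Finset.Icc 1 n,
        c k ^ 2 * ((k:ℂ) ^ 2 * c k + (2 * (k:ℂ) - 1) * ∑ j ∈ Finset.range k, c j) := by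
  have hle : ∀ i : ℕ, (i:ℝ) / n ≤ (i + 1) / n := fun i => by gcongr; linarith
  have hcube := fun i (hi : i < n) => intervalIntegrable_and_integral_of_eqOn_Ioo (hle i)
    (f := fun t => (t:ℂ) ^ 2 * s t ^ 3) (u := 0) (w := c (i + 1) ^ 3) fun t ht => by
      simp only [hs i hi t (Ioo_subset_Ico_self ht)]
      ring
  have hmixed := fun i (hi : i < n) => intervalIntegrable_and_integral_of_eqOn_Ioo (hle i)
    (f := fun t => (t:ℂ) * primitive s t * s t ^ 2)
    (u := c (i + 1) ^ 2 * ((∑ j ∈ Finset.range i, c (j + 1)) / n - c (i + 1) * i / n))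
    (w := c (i + 1) ^ 3) fun t ht => by
      simp only [hs i hi t (Ioo_subset_Ico_self ht), hs.primitive_eq hi (Ioo_subset_Icc_self ht)]
      ring
  have hIcc : ∀ F : ℕ → ℂ, ∑ k ∈ Finset.Icc 1 n, F k = ∑ i ∈ Finset.range n, F (i + 1) :=
    fun F => by
      rw [Finset.range_eq_Ico, Finset.sum_Ico_add', zero_add, Finset.Ico_add_one_right_eq_Icc]
  rw [integral_zero_one_eq_sum hn fun i hi => (hcube i hi).1,
    integral_zero_one_eq_sum hn fun i hi => (hmixed i hi).1, Finset.mul_sum, Finset.mul_sum,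
    ← Finset.sum_add_distrib, hIcc, Finset.mul_sum]
  refine Finset.sum_congr rfl fun i hi => ?_
  have hi' : i < n := Finset.mem_range.1 hi
  have hn' : (n:ℂ) ≠ 0 := by exact_mod_cast hn.ne'
  rw [(hcube i hi').2, (hmixed i hi').2, Finset.sum_range_succ' c, hc0]
  push_cast
  field_simp
  ring

end Step

theorem fourth_coeff_of_step_general (n : ℕ) (hn : 1 ≤ n) (c : ℕ → ℂ) (hc0 : c 0 = 0)
    (s : ℝ → ℂ)
    (hstep : ∀ k, 1 ≤ k → k ≤ n → ∀ x : ℝ, ((k : ℝ) - 1) / n ≤ x → x < (k : ℝ) / n → s x = c k)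
    (f : ℂ → ℂ) (hgen : IsGeneratingFn s f) :
    taylorCoeff f 4 = 3 * taylorCoeff f 2 * taylorCoeff f 3 - 2 * (taylorCoeff f 2) ^ 3 -
      (2 / (n : ℂ) ^ 3) * ∑ k ∈ Finset.Icc 1 n,
        (c k) ^ 2 * ((k : ℂ) ^ 2 * c k + (2 * (k : ℂ) - 1) * ∑ j ∈ Finset.range k, c j) := by
  have hs : IsEquidistantStep n c s := fun i hi x hx =>
    hstep (i + 1) (by omega) hi x (by push_cast; simpa using hx.1) (by push_cast; exact hx.2)
  rw [taylorCoeff_four_of_isGeneratingFn hgen fun t ht => hs.continuousWithinAt_Ici hn ht,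
    hs.two_mul_integral_add_four_mul_integral hn hc0]

/-- **Lemma 1, formula (20).** If the step function `s ∈ T_n([0,1])` with values
`c_1, …, c_n` (and `c_0 = 0`) generates the schlicht function `f`, then
`a_4 = 3a_2a_3 - 2a_2³ - (2/n³) ∑_{k=1}^n c_k² (k² c_k + (2k-1) ∑_{j=0}^{k-1} c_j)`. -/
theorem fourth_coeff_of_step (n : ℕ) (hn : 1 ≤ n) (c : ℕ → ℂ) (hc0 : c 0 = 0)
    (hc : ∀ k, 1 ≤ k → k ≤ n → ‖c k‖ = 1)
    (s : ℝ → ℂ)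
    (hstep : ∀ k, 1 ≤ k → k ≤ n → ∀ x : ℝ, ((k : ℝ) - 1) / n ≤ x → x < (k : ℝ) / n → s x = c k)
    (hs1 : s 1 = c n)
    (f : ℂ → ℂ) (hf : Schlicht f) (hgen : IsGeneratingFn s f) :
    taylorCoeff f 4 = 3 * taylorCoeff f 2 * taylorCoeff f 3 - 2 * (taylorCoeff f 2) ^ 3 -
      (2 / (n : ℂ) ^ 3) * ∑ k ∈ Finset.Icc 1 n,
        (c k) ^ 2 * ((k : ℂ) ^ 2 * c k + (2 * (k : ℂ) - 1) * ∑ j ∈ Finset.range k, c j) :=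
  fourth_coeff_of_step_general n hn c hc0 s hstep f hgen

end
end

section
/- Let μ : (0,1] → ℂ be measurable with |μ(t)| = 1 for all t, and let g_2, g_3, g_4 be defined by g_2(x) = -∫_0^x 2 μ(t) dt, g_3(x) = -∫_0^x (2 t μ(t)^2 + 4 g_2(t) μ(t)) dt, and g_4(x) = -∫_0^x (2 t^2 μ(t)^3 + 4 t g_2(t) μ(t)^2 + 6 g_3(t) μ(t)) dt. Then g_4(1) = 3 g_2(1) g_3(1) - 2 g_2(1)^3 + ∫_0^1 ( -2 t^2 μ(t)^3 + 2 t g_2(t) μ(t)^2 ) dt. -/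
open MeasureTheory Filter Topology

noncomputable section

/-!
Put `F = g₄ - 3 g₂ g₃ + 2 g₂³`. Each `g_n` is minus the primitive of a bounded integrand, hence
Lipschitz, so absolutely continuous with `g_n' = -(integrand)` almost everywhere. Differentiating
`F`, the terms in `g₃ μ` and `g₂² μ` cancel, leaving `F' = -2t²μ³ + 2t g₂ μ²`. Since `F(0) = 0`, the
fundamental theorem of calculus for absolutely continuous functions gives the identity at `1`.
-/

open Set intervalIntegral
open scoped ENNReal Interval

theorem MeasureTheory.MemLp.pow_top {α 𝕜 : Type*} [MeasurableSpace α] [NormedRing 𝕜]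
    {μ : Measure α} {f : α → 𝕜} (hf : MemLp f ∞ μ) (n : ℕ) :
    MemLp (fun x => f x ^ n) ∞ μ := by
  induction n with
  | zero => simpa using memLp_top_const (1 : 𝕜)
  | succ n ih => simpa only [pow_succ] using hf.mul' ih

section Primitive

variable {E : Type*} [NormedAddCommGroup E] {f g G : ℝ → E} {a b : ℝ}

theorem AbsolutelyContinuousOnInterval.memLp_top (hG : AbsolutelyContinuousOnInterval G a b) :
    MemLp G ∞ (volume.restrict (Ι a b)) := by
  obtain ⟨C, hC⟩ := hG.exists_bound
  refine memLp_top_of_bound ?_ C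
    (ae_restrict_of_forall_mem measurableSet_uIoc fun x hx => hC x (uIoc_subset_uIcc hx))
  exact (hG.continuousOn.aestronglyMeasurable measurableSet_uIcc).mono_set uIoc_subset_uIcc

theorem MeasureTheory.MemLp.intervalIntegrable (hf : MemLp f ∞ (volume.restrict (Ι a b))) :
    IntervalIntegrable f volume a b :=
  have : IsFiniteMeasure (volume.restrict (Ι a b)) :=
    isFiniteMeasure_restrict.2 measure_Ioc_lt_top.ne
  intervalIntegrable_iff.2 (hf.integrable le_top)

variable [NormedSpace ℝ E]

/-- An essential bound `C` of `f` makes the primitive `C`-Lipschitz. -/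
theorem MeasureTheory.MemLp.absolutelyContinuousOnInterval_of_eqOn_integral
    (hf : MemLp f ∞ (volume.restrict (Ι a b)))
    (hG : EqOn G (fun x => ∫ t in a..x, f t) (uIcc a b)) :
    AbsolutelyContinuousOnInterval G a b := by
  obtain ⟨C, hC⟩ := eLpNormEssSup_lt_top_iff_isBoundedUnder.1
    (eLpNorm_exponent_top (f := f) ▸ hf.eLpNorm_lt_top)
  rw [eventually_map, ae_restrict_iff' measurableSet_uIoc] at hC
  refine LipschitzOnWith.absolutelyContinuousOnInterval (f := G) (K := C)
    (LipschitzOnWith.of_dist_le_mul fun x hx y hy => ?_)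
  have hfa (z) (hz : z ∈ uIcc a b) : IntervalIntegrable f volume a z :=
    hf.intervalIntegrable.mono_set (uIcc_subset_uIcc left_mem_uIcc hz)
  rw [hG hx, hG hy, dist_eq_norm, integral_interval_sub_left (hfa x hx) (hfa y hy),
    Real.dist_eq]
  refine norm_integral_le_of_norm_le_const_ae ?_
  filter_upwards [hC] with t ht hts
  exact ht (uIoc_subset_uIoc_of_uIcc_subset_uIcc (uIcc_subset_uIcc hy hx) hts)

variable [CompleteSpace E]

theorem IntervalIntegrable.ae_hasDerivAt_of_eqOn_integral (hf : IntervalIntegrable f volume a b)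
    (hG : EqOn G (fun x => ∫ t in a..x, f t) (uIcc a b)) :
    ∀ᵐ x, x ∈ uIcc a b → HasDerivAt G (f x) x := by
  have hmin : ∀ᵐ x : ℝ, x ≠ min a b := by simp [ae_iff, measure_singleton]
  have hmax : ∀ᵐ x : ℝ, x ≠ max a b := by simp [ae_iff, measure_singleton]
  filter_upwards [hf.ae_hasDerivAt_integral, hmin, hmax] with x hx hxmin hxmax hxI
  refine (hx hxI a left_mem_uIcc).congr_of_eventuallyEq (hG.eventuallyEq_of_mem ?_)
  exact Icc_mem_nhds (lt_of_le_of_ne hxI.1 hxmin.symm) (lt_of_le_of_ne hxI.2 hxmax)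

theorem absolutelyContinuousOnInterval_and_ae_hasDerivAt_of_eq_neg_integral
    (hG : ∀ x ∈ uIcc a b, G x = -∫ t in a..x, f t) (hf : MemLp f ∞ (volume.restrict (Ι a b))) :
    AbsolutelyContinuousOnInterval G a b ∧ ∀ᵐ x, x ∈ uIcc a b → HasDerivAt G (-f x) x := by
  have hG' : EqOn G (fun x => ∫ t in a..x, -f t) (uIcc a b) := fun x hx =>
    (hG x hx).trans intervalIntegral.integral_neg.symm
  exact ⟨hf.neg.absolutelyContinuousOnInterval_of_eqOn_integral hG',
    hf.neg.intervalIntegrable.ae_hasDerivAt_of_eqOn_integral hG'⟩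

theorem AbsolutelyContinuousOnInterval.integral_eq_sub_of_ae_hasDerivAt
    (hG : AbsolutelyContinuousOnInterval G a b) (hg : MemLp g ∞ (volume.restrict (Ι a b)))
    (hG' : ∀ᵐ x, x ∈ uIcc a b → HasDerivAt G (g x) x) :
    ∫ x in a..b, g x = G b - G a := by
  set P := fun x => ∫ t in a..x, g t
  have hP := hg.absolutelyContinuousOnInterval_of_eqOn_integral (eqOn_refl P _)
  have hP' := hg.intervalIntegrable.ae_hasDerivAt_of_eqOn_integral (eqOn_refl P _)
  obtain ⟨C, hC⟩ := (hG.sub hP).const_of_ae_hasDerivAt_zero (by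
    filter_upwards [hG', hP'] with x h₁ h₂ hx
    simpa using (h₁ hx).sub (h₂ hx))
  have ha := hC a left_mem_uIcc
  have hb := hC b right_mem_uIcc
  simp only [Pi.sub_apply, P, integral_same, sub_zero] at ha hb
  rw [ha, ← hb]
  abel

end Primitive

theorem hasDerivAt_g4_sub_three_g2_g3_add_two_g2_cube {g2 g3 g4 : ℝ → ℂ} {m : ℂ} {x : ℝ}
    (h2 : HasDerivAt g2 (-(2 * m)) x)
    (h3 : HasDerivAt g3 (-(2 * x * m ^ 2 + 4 * g2 x * m)) x)
    (h4 : HasDerivAt g4 (-(2 * (x : ℂ) ^ 2 * m ^ 3 + 4 * x * g2 x * m ^ 2 + 6 * g3 x * m)) x) :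
    HasDerivAt (fun y => g4 y - 3 * g2 y * g3 y + 2 * g2 y ^ 3)
      (-(2 * (x : ℂ) ^ 2 * m ^ 3) + 2 * x * g2 x * m ^ 2) x := by
  refine ((h4.sub ((h2.const_mul 3).mul h3)).add ((h2.pow 3).const_mul 2)).congr_deriv ?_
  push_cast
  ring

/-- **Formula (23).** For a unimodular measurable driving function `μ` on `(0,1]`, with
`g_2, g_3, g_4` given by the Löwner recursion, one has
`g_4(1) = 3g_2(1)g_3(1) - 2g_2(1)³ + ∫₀¹ (-2t²μ(t)³ + 2tg_2(t)μ(t)²) dt`. -/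
theorem g4_identity (μ : ℝ → ℂ)
    (hmeas : AEMeasurable μ (volume.restrict (Set.Ioc (0:ℝ) 1)))
    (hnorm : ∀ t ∈ Set.Ioc (0:ℝ) 1, ‖μ t‖ = 1)
    (g2 g3 g4 : ℝ → ℂ)
    (hg2 : ∀ x ∈ Set.Icc (0:ℝ) 1, g2 x = -∫ t in (0:ℝ)..x, 2 * μ t)
    (hg3 : ∀ x ∈ Set.Icc (0:ℝ) 1,
      g3 x = -∫ t in (0:ℝ)..x, (2 * (t : ℂ) * (μ t) ^ 2 + 4 * g2 t * μ t))
    (hg4 : ∀ x ∈ Set.Icc (0:ℝ) 1,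
      g4 x = -∫ t in (0:ℝ)..x,
        (2 * (t : ℂ) ^ 2 * (μ t) ^ 3 + 4 * (t : ℂ) * g2 t * (μ t) ^ 2 + 6 * g3 t * μ t)) :
    g4 1 = 3 * g2 1 * g3 1 - 2 * (g2 1) ^ 3 +
      ∫ t in (0:ℝ)..1, (-(2 * (t : ℂ) ^ 2 * (μ t) ^ 3) + 2 * (t : ℂ) * g2 t * (μ t) ^ 2) := by
  have hI : uIcc (0:ℝ) 1 = Icc 0 1 := uIcc_of_le zero_le_one
  have hμ : MemLp μ ∞ (volume.restrict (Ι 0 1)) := by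
    rw [uIoc_of_le zero_le_one]
    exact memLp_top_of_bound hmeas.aestronglyMeasurable 1
      (ae_restrict_of_forall_mem measurableSet_Ioc fun t ht => (hnorm t ht).le)
  have hid : MemLp (fun t : ℝ => (t : ℂ)) ∞ (volume.restrict (Ι 0 1)) :=
    Complex.isometry_ofReal.lipschitz.lipschitzOnWith.absolutelyContinuousOnInterval.memLp_top
  obtain ⟨ac2, d2⟩ :=
    absolutelyContinuousOnInterval_and_ae_hasDerivAt_of_eq_neg_integral (hI ▸ hg2)
      (hμ.const_mul 2)
  obtain ⟨ac3, d3⟩ :=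
    absolutelyContinuousOnInterval_and_ae_hasDerivAt_of_eq_neg_integral (hI ▸ hg3)
      (((hμ.pow_top 2).mul' (hid.const_mul 2)).add (hμ.mul' (ac2.memLp_top.const_mul 4)))
  obtain ⟨ac4, d4⟩ :=
    absolutelyContinuousOnInterval_and_ae_hasDerivAt_of_eq_neg_integral (hI ▸ hg4)
      ((((hμ.pow_top 3).mul' ((hid.pow_top 2).const_mul 2)).add
        ((hμ.pow_top 2).mul' (ac2.memLp_top.mul' (r := ∞) (hid.const_mul 4)))).add
        (hμ.mul' (ac3.memLp_top.const_mul 6)))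
  have hF :
      AbsolutelyContinuousOnInterval (fun x => g4 x - 3 * g2 x * g3 x + 2 * g2 x ^ 3) 0 1 := by
    convert (ac4.sub ((ac2.const_smul (3 : ℂ)).smul ac3)).add
      ((ac2.smul (ac2.smul ac2)).const_smul (2 : ℂ)) using 1
    · rfl
    · funext x
      simp only [Pi.add_apply, Pi.sub_apply, smul_eq_mul, Pi.mul_apply]
      ring
  have hF' := hF.integral_eq_sub_of_ae_hasDerivAt
    (((hμ.pow_top 3).mul' ((hid.pow_top 2).const_mul 2)).neg.add
      ((hμ.pow_top 2).mul' (ac2.memLp_top.mul' (r := ∞) (hid.const_mul 2))))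
    (by
      filter_upwards [d2, d3, d4] with x h2 h3 h4 hx
      exact hasDerivAt_g4_sub_three_g2_g3_add_two_g2_cube (h2 hx) (h3 hx) (h4 hx))
  simp only [hg2 0 (by simp), hg3 0 (by simp), hg4 0 (by simp), integral_same] at hF'
  linear_combination -hF'
end
end

section
/- Let κ : [0,∞) → ℂ be continuous with |κ(t)| = 1 for all t, and let γ_1, γ_2 : [0,∞) → ℂ be differentiable functions satisfying γ_1'(t) = γ_1(t) + κ(t) and γ_2'(t) = 2 γ_2(t) + 2 γ_1(t) κ(t) + κ(t)^2 for all t ≥ 0, together with e^{-t} γ_1(t) → 0 and e^{-2t} γ_2(t) → 0 as t → ∞. Then γ_1(0) = -∫_0^∞ e^{-s} κ(s) ds and γ_2(0) = γ_1(0)^2 - ∫_0^∞ e^{-2t} κ(t)^2 dt. -/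
open MeasureTheory Filter Topology

noncomputable section

/-!
With the integrating factor `e^{-ct}`, a solution of `γ' = cγ + h` satisfies `(e^{-ct}γ)' = e^{-ct}h`,
so if `e^{-ct}γ(t) → 0` then `γ(0) = -∫₀^∞ e^{-ct}h`. This is the first identity for `c = 1`,
`h = κ`; for the second, `γ₂ - γ₁²` solves `G' = 2G + κ²`.
-/

open Set

section IntegratingFactor

variable {c : ℂ} {γ h : ℝ → ℂ}

theorem HasDerivWithinAt.cexp_neg_mul_mul {s : Set ℝ} {t : ℝ}
    (hγ : HasDerivWithinAt γ (c * γ t + h t) s t) :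
    HasDerivWithinAt (fun t : ℝ => Complex.exp (-c * t) * γ t)
      (Complex.exp (-c * t) * h t) s t := by
  have hexp : HasDerivAt (fun t : ℝ => Complex.exp (-c * t)) (Complex.exp (-c * t) * -c) t := by
    simpa using ((hasDerivAt_id (t : ℂ)).const_mul (-c)).cexp.comp_ofReal
  exact (hexp.hasDerivWithinAt.mul hγ).congr_deriv (by ring)

theorem integrableOn_Ioi_cexp_neg_mul_mul_of_norm_le (hc : 0 < c.re) {C : ℝ}
    (hh : AEStronglyMeasurable h (volume.restrict (Ioi 0))) (hbound : ∀ t ∈ Ioi (0 : ℝ), ‖h t‖ ≤ C) :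
    IntegrableOn (fun t : ℝ => Complex.exp (-c * t) * h t) (Ioi 0) :=
  (integrableOn_exp_mul_complex_Ioi (a := -c) (by simpa using hc) 0).mul_bdd hh
    ((ae_restrict_iff' measurableSet_Ioi).mpr (.of_forall hbound))

theorem eq_neg_integral_of_hasDerivWithinAt_of_tendsto (hc : 0 < c.re) {C : ℝ}
    (hγ : ∀ t ∈ Ici (0 : ℝ), HasDerivWithinAt γ (c * γ t + h t) (Ici 0) t)
    (hh : AEStronglyMeasurable h (volume.restrict (Ioi 0))) (hbound : ∀ t ∈ Ioi (0 : ℝ), ‖h t‖ ≤ C)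
    (hlim : Tendsto (fun t : ℝ => Complex.exp (-c * t) * γ t) atTop (𝓝 0)) :
    γ 0 = -∫ t in Ioi (0 : ℝ), Complex.exp (-c * t) * h t := by
  have hderiv (t : ℝ) (ht : t ∈ Ici 0) := (hγ t ht).cexp_neg_mul_mul
  rw [integral_Ioi_of_hasDerivAt_of_tendsto (hderiv 0 self_mem_Ici).continuousWithinAt
    (fun t ht => (hderiv t (Ioi_subset_Ici_self ht)).hasDerivAt (Ici_mem_nhds ht))
    (integrableOn_Ioi_cexp_neg_mul_mul_of_norm_le hc hh hbound) hlim]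
  simp

end IntegratingFactor

/-- The integrated forms of the Löwner differential equations for the first and second
logarithmic coefficients: if `γ₁' = γ₁ + κ`, `γ₂' = 2γ₂ + 2γ₁κ + κ²` on `[0,∞)` with
`e^{-t}γ₁(t) → 0` and `e^{-2t}γ₂(t) → 0`, then `γ₁(0) = -∫₀^∞ e^{-s}κ(s) ds` and
`γ₂(0) = γ₁(0)² - ∫₀^∞ e^{-2t}κ(t)² dt`. -/
theorem log_coeff_integral_form (κ γ1 γ2 : ℝ → ℂ)
    (hκc : ContinuousOn κ (Set.Ici (0:ℝ)))
    (hκn : ∀ t ∈ Set.Ici (0:ℝ), ‖κ t‖ = 1)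
    (hγ1 : ∀ t ∈ Set.Ici (0:ℝ),
      HasDerivWithinAt γ1 (γ1 t + κ t) (Set.Ici (0:ℝ)) t)
    (hγ2 : ∀ t ∈ Set.Ici (0:ℝ),
      HasDerivWithinAt γ2 (2 * γ2 t + 2 * γ1 t * κ t + (κ t) ^ 2) (Set.Ici (0:ℝ)) t)
    (hlim1 : Tendsto (fun t : ℝ => Complex.exp (-(t : ℂ)) * γ1 t) atTop (𝓝 0))
    (hlim2 : Tendsto (fun t : ℝ => Complex.exp (-2 * (t : ℂ)) * γ2 t) atTop (𝓝 0)) :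
    γ1 0 = -∫ s in Set.Ioi (0:ℝ), Complex.exp (-(s : ℂ)) * κ s ∧
    γ2 0 = (γ1 0) ^ 2 - ∫ t in Set.Ioi (0:ℝ), Complex.exp (-2 * (t : ℂ)) * (κ t) ^ 2 := by
  have hκm : AEStronglyMeasurable κ (volume.restrict (Ioi 0)) :=
    (hκc.mono Ioi_subset_Ici_self).aestronglyMeasurable measurableSet_Ioi
  have hκb (t : ℝ) (ht : t ∈ Ioi 0) : ‖κ t‖ ≤ 1 := (hκn t (Ioi_subset_Ici_self ht)).le
  have first : γ1 0 = -∫ s in Ioi (0 : ℝ), Complex.exp (-1 * (s : ℂ)) * κ s :=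
    eq_neg_integral_of_hasDerivWithinAt_of_tendsto (c := 1) (by simp)
      (fun t ht => by simpa using hγ1 t ht) hκm hκb (by simpa using hlim1)
  have second : γ2 0 - γ1 0 ^ 2 = -∫ t in Ioi (0 : ℝ), Complex.exp (-2 * (t : ℂ)) * κ t ^ 2 := by
    refine eq_neg_integral_of_hasDerivWithinAt_of_tendsto (γ := fun t => γ2 t - γ1 t ^ 2)
      (C := 1) (by simp) (fun t ht => ?_) (hκm.pow 2) (fun t ht => by simp [hκb t ht]) ?_
    · exact ((hγ2 t ht).fun_sub ((hγ1 t ht).fun_pow 2)).congr_deriv (by push_cast; ring)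
    · have hsq (t : ℝ) : Complex.exp (-2 * t) = Complex.exp (-t) ^ 2 := by
        rw [← Complex.exp_nat_mul]; ring_nf
      simpa only [mul_sub, hsq, mul_pow, sub_zero, zero_pow two_ne_zero] using
        hlim2.sub (hlim1.pow 2)
  exact ⟨by simpa using first, by linear_combination second⟩
end
end

section
/- Let θ : [0,∞) → ℝ be continuous, and set γ_1 = -∫_0^∞ e^{-t} cos θ(t) dt and γ_2 = γ_1^2 - ∫_0^∞ e^{-2t} cos 2θ(t) dt. Let λ ≥ 0 satisfy ∫_0^∞ e^{-2t} cos^2 θ(t) dt = (λ + 1/2) e^{-2λ}. Then 2 γ_2^2 + γ_1^2 ≤ 2 (λ^2 e^{-2λ} + 1/2)^2 + (λ + 1)^2 e^{-2λ}. -/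
open MeasureTheory Filter Topology

noncomputable section

/-!
The Valiron–Landau lemma is a pointwise Lagrange-multiplier argument. For `k > 0` the concave
function `x - (k/2) x²` is maximized on `x ≤ 1` at `min 1 k⁻¹`. Taking `k = e^{λ-t}` and
multiplying by `e^{-t}` shows that among all `g ≤ 1` the function `ψ(t) = min 1 e^{t-λ}`
maximizes `∫ e^{-t} g - (e^λ/2) ∫ e^{-2t} g²`. Since `ψ` meets the constraint
`∫ e^{-2t} ψ² = (λ + 1/2) e^{-2λ}`, this gives `∫ e^{-t} g ≤ ∫ e^{-t} ψ = (λ + 1) e^{-λ}`;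
applied to `±cos θ` it bounds `γ₁`. For `γ₂`, `cos 2θ = 2 cos² θ - 1` gives
`γ₂ = γ₁² - (2λ + 1) e^{-2λ} + 1/2`, and `(2λ + 1) e^{-2λ} ≤ 1` bounds it on both sides.
-/

open Real Set

lemma sub_half_mul_sq_le_min_one_inv {k x : ℝ} (hk : 0 < k) (hx : x ≤ 1) :
    x - k / 2 * x ^ 2 ≤ min 1 k⁻¹ - k / 2 * min 1 k⁻¹ ^ 2 := by
  rcases le_or_gt k 1 with hk₁ | hk₁
  · rw [min_eq_left ((one_le_inv₀ hk).2 hk₁)]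
    have hk' : 0 ≤ 2 - k * (1 + x) := by nlinarith
    nlinarith [mul_nonneg (sub_nonneg.2 hx) hk']
  · rw [min_eq_right (inv_le_one_of_one_le₀ hk₁.le)]
    have hsq : k⁻¹ - k / 2 * k⁻¹ ^ 2 - (x - k / 2 * x ^ 2) = k / 2 * (x - k⁻¹) ^ 2 := by
      field_simp; ring
    nlinarith [mul_nonneg hk.le (sq_nonneg (x - k⁻¹))]

def valironExtremal (lam t : ℝ) : ℝ := min 1 (exp (t - lam))

namespace valironExtremal

variable {lam t : ℝ}

@[fun_prop]
lemma continuous (lam : ℝ) : Continuous (valironExtremal lam) := by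
  unfold valironExtremal; fun_prop

lemma eq_exp_of_le (h : t ≤ lam) : valironExtremal lam t = exp (t - lam) :=
  min_eq_right (exp_le_one_iff.2 (by linarith))

lemma eq_one_of_ge (h : lam ≤ t) : valironExtremal lam t = 1 :=
  min_eq_left (one_le_exp (by linarith))

lemma abs_le_one (lam t : ℝ) : |valironExtremal lam t| ≤ 1 :=
  abs_le.2 ⟨(neg_nonpos.2 zero_le_one).trans (le_min zero_le_one (exp_pos _).le),
    min_le_left _ _⟩

lemma exp_neg_mul_sub_le (lam t : ℝ) {x : ℝ} (hx : x ≤ 1) :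
    exp (-t) * x - exp lam / 2 * (exp (-2 * t) * x ^ 2) ≤
      exp (-t) * valironExtremal lam t -
        exp lam / 2 * (exp (-2 * t) * valironExtremal lam t ^ 2) := by
  have key : x - exp (lam - t) / 2 * x ^ 2 ≤
      valironExtremal lam t - exp (lam - t) / 2 * valironExtremal lam t ^ 2 := by
    have := sub_half_mul_sq_le_min_one_inv (exp_pos (lam - t)) hx
    rwa [← exp_neg, neg_sub] at this
  have hk : exp (-t) * exp (lam - t) = exp lam * exp (-2 * t) := by
    rw [← exp_add, ← exp_add]; ring_nf
  linear_combination mul_le_mul_of_nonneg_left key (exp_pos (-t)).le +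
    (x ^ 2 - valironExtremal lam t ^ 2) / 2 * hk

lemma integral_exp_neg_mul (hlam : 0 ≤ lam) :
    ∫ t in Ioi 0, exp (-t) * valironExtremal lam t = (lam + 1) * exp (-lam) := by
  have hbelow : ∫ t in 0..lam, exp (-t) * valironExtremal lam t = lam * exp (-lam) := by
    rw [intervalIntegral.integral_congr (g := fun _ => exp (-lam)), intervalIntegral.integral_const,
      sub_zero, smul_eq_mul]
    intro t ht
    rw [uIcc_of_le hlam] at ht
    simp only [eq_exp_of_le ht.2, ← exp_add]
    ring_nf
  have habove : EqOn (fun t => exp (-t) * valironExtremal lam t) (fun t => exp (-t)) (Ioi lam) :=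
    fun t ht => by simp only [eq_one_of_ge (le_of_lt ht), mul_one]
  rw [← intervalIntegral.integral_interval_add_Ioi'
      ((by fun_prop : Continuous fun t => exp (-t) * valironExtremal lam t).intervalIntegrable 0 lam)
      ((integrableOn_exp_neg_Ioi lam).congr_fun habove.symm measurableSet_Ioi),
    hbelow, setIntegral_congr_fun measurableSet_Ioi habove, integral_exp_neg_Ioi]
  ring

lemma integral_exp_neg_two_mul_mul_sq (hlam : 0 ≤ lam) :
    ∫ t in Ioi 0, exp (-2 * t) * valironExtremal lam t ^ 2 = (lam + 1 / 2) * exp (-2 * lam) := by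
  have hbelow : ∫ t in 0..lam, exp (-2 * t) * valironExtremal lam t ^ 2 =
      lam * exp (-2 * lam) := by
    rw [intervalIntegral.integral_congr (g := fun _ => exp (-2 * lam)),
      intervalIntegral.integral_const, sub_zero, smul_eq_mul]
    intro t ht
    rw [uIcc_of_le hlam] at ht
    simp only [eq_exp_of_le ht.2, ← exp_nat_mul, ← exp_add]
    ring_nf
  have habove : EqOn (fun t => exp (-2 * t) * valironExtremal lam t ^ 2) (fun t => exp (-2 * t))
      (Ioi lam) :=
    fun t ht => by simp only [eq_one_of_ge (le_of_lt ht), one_pow, mul_one]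
  rw [← intervalIntegral.integral_interval_add_Ioi'
      ((by fun_prop : Continuous fun t => exp (-2 * t) * valironExtremal lam t ^ 2).intervalIntegrable
        0 lam)
      ((integrableOn_exp_mul_Ioi (by norm_num) lam).congr_fun habove.symm measurableSet_Ioi),
    hbelow, setIntegral_congr_fun measurableSet_Ioi habove, integral_exp_mul_Ioi (by norm_num)]
  ring

end valironExtremal

section ExpWeight

variable {g : ℝ → ℝ}

lemma integrableOn_exp_neg_mul_of_abs_le_one
    (hg : AEStronglyMeasurable g (volume.restrict (Ioi 0))) (hg₁ : ∀ t, |g t| ≤ 1) :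
    IntegrableOn (fun t => exp (-t) * g t) (Ioi 0) :=
  (integrableOn_exp_neg_Ioi 0).mul_bdd hg (ae_of_all _ hg₁)

lemma integrableOn_exp_neg_two_mul_mul_sq_of_abs_le_one
    (hg : AEStronglyMeasurable g (volume.restrict (Ioi 0))) (hg₁ : ∀ t, |g t| ≤ 1) :
    IntegrableOn (fun t => exp (-2 * t) * g t ^ 2) (Ioi 0) :=
  (integrableOn_exp_mul_Ioi (by norm_num) 0).mul_bdd (hg.pow 2) <| ae_of_all _ fun t => by
    simpa only [norm_pow, Real.norm_eq_abs] using pow_le_one₀ (abs_nonneg _) (hg₁ t)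

lemma integral_exp_neg_mul_le_of_integral_exp_neg_two_mul_mul_sq {lam : ℝ} (hlam : 0 ≤ lam)
    (hg : AEStronglyMeasurable g (volume.restrict (Ioi 0))) (hg₁ : ∀ t, |g t| ≤ 1)
    (h : ∫ t in Ioi 0, exp (-2 * t) * g t ^ 2 = (lam + 1 / 2) * exp (-2 * lam)) :
    ∫ t in Ioi 0, exp (-t) * g t ≤ (lam + 1) * exp (-lam) := by
  have hψ : AEStronglyMeasurable (valironExtremal lam) (volume.restrict (Ioi 0)) :=
    (valironExtremal.continuous lam).aestronglyMeasurable
  have hψ₁ := valironExtremal.abs_le_one lam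
  have hg_int := integrableOn_exp_neg_mul_of_abs_le_one hg hg₁
  have hg_int₂ :=
    (integrableOn_exp_neg_two_mul_mul_sq_of_abs_le_one hg hg₁).const_mul (exp lam / 2)
  have hψ_int := integrableOn_exp_neg_mul_of_abs_le_one hψ hψ₁
  have hψ_int₂ :=
    (integrableOn_exp_neg_two_mul_mul_sq_of_abs_le_one hψ hψ₁).const_mul (exp lam / 2)
  have key := setIntegral_mono_on (hg_int.sub hg_int₂) (hψ_int.sub hψ_int₂) measurableSet_Ioi
    fun t _ => valironExtremal.exp_neg_mul_sub_le lam t ((le_abs_self _).trans (hg₁ t))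
  simp only [Pi.sub_apply] at key
  rw [integral_sub hg_int hg_int₂, integral_sub hψ_int hψ_int₂, integral_const_mul,
    integral_const_mul, h,
    valironExtremal.integral_exp_neg_mul hlam,
    valironExtremal.integral_exp_neg_two_mul_mul_sq hlam] at key
  linarith

theorem abs_integral_exp_neg_mul_le_of_integral_exp_neg_two_mul_mul_sq {lam : ℝ} (hlam : 0 ≤ lam)
    (hg : AEStronglyMeasurable g (volume.restrict (Ioi 0))) (hg₁ : ∀ t, |g t| ≤ 1)
    (h : ∫ t in Ioi 0, exp (-2 * t) * g t ^ 2 = (lam + 1 / 2) * exp (-2 * lam)) :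
    |∫ t in Ioi 0, exp (-t) * g t| ≤ (lam + 1) * exp (-lam) := by
  have hneg := integral_exp_neg_mul_le_of_integral_exp_neg_two_mul_mul_sq (g := fun t => -g t)
    hlam hg.neg (fun t => (abs_neg (g t)).trans_le (hg₁ t)) (by simpa only [neg_sq] using h)
  simp only [mul_neg, integral_neg] at hneg
  exact abs_le.2 ⟨by linarith,
    integral_exp_neg_mul_le_of_integral_exp_neg_two_mul_mul_sq hlam hg hg₁ h⟩

lemma integral_exp_neg_two_mul_mul_cos_two_mul {θ : ℝ → ℝ}
    (hθ : IntegrableOn (fun t => exp (-2 * t) * cos (θ t) ^ 2) (Ioi 0)) :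
    ∫ t in Ioi 0, exp (-2 * t) * cos (2 * θ t) =
      2 * (∫ t in Ioi 0, exp (-2 * t) * cos (θ t) ^ 2) - 1 / 2 := by
  have hcos : (fun t => exp (-2 * t) * cos (2 * θ t)) =
      fun t => 2 * (exp (-2 * t) * cos (θ t) ^ 2) - exp (-2 * t) := by
    ext t; rw [cos_two_mul]; ring
  rw [hcos, integral_sub (hθ.const_mul 2) (integrableOn_exp_mul_Ioi (by norm_num) 0),
    integral_const_mul, integral_exp_mul_Ioi (by norm_num), mul_zero, exp_zero]
  ring

end ExpWeight

lemma add_one_mul_exp_neg_le_one (x : ℝ) : (x + 1) * exp (-x) ≤ 1 := by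
  calc (x + 1) * exp (-x) ≤ exp x * exp (-x) :=
        mul_le_mul_of_nonneg_right (add_one_le_exp x) (exp_pos _).le
    _ = 1 := by rw [← exp_add, add_neg_cancel, exp_zero]

/-- **Inequality (24).** With `γ₁ = -∫₀^∞ e^{-t} cos θ(t) dt`,
`γ₂ = γ₁² - ∫₀^∞ e^{-2t} cos 2θ(t) dt` and `λ ≥ 0` determined by
`∫₀^∞ e^{-2t} cos² θ(t) dt = (λ + 1/2) e^{-2λ}`, one has
`2γ₂² + γ₁² ≤ 2(λ²e^{-2λ} + 1/2)² + (λ+1)²e^{-2λ}`. -/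
theorem valiron_landau_bound (θ : ℝ → ℝ) (hθ : ContinuousOn θ (Set.Ici (0:ℝ)))
    (γ1 γ2 lam : ℝ)
    (hγ1 : γ1 = -∫ t in Set.Ioi (0:ℝ), Real.exp (-t) * Real.cos (θ t))
    (hγ2 : γ2 = γ1 ^ 2 - ∫ t in Set.Ioi (0:ℝ), Real.exp (-2 * t) * Real.cos (2 * θ t))
    (hlam : 0 ≤ lam)
    (hint : ∫ t in Set.Ioi (0:ℝ), Real.exp (-2 * t) * (Real.cos (θ t)) ^ 2 =
      (lam + 1 / 2) * Real.exp (-2 * lam)) :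
    2 * γ2 ^ 2 + γ1 ^ 2 ≤
      2 * (lam ^ 2 * Real.exp (-2 * lam) + 1 / 2) ^ 2 +
        (lam + 1) ^ 2 * Real.exp (-2 * lam) := by
  have hcos : AEStronglyMeasurable (fun t => cos (θ t)) (volume.restrict (Ioi 0)) :=
    (continuous_cos.comp_continuousOn (hθ.mono Ioi_subset_Ici_self)).aestronglyMeasurable
      measurableSet_Ioi
  have hcos₁ : ∀ t, |cos (θ t)| ≤ 1 := fun t => abs_cos_le_one _
  have hγ1_sq : γ1 ^ 2 ≤ (lam + 1) ^ 2 * exp (-2 * lam) :=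
    calc γ1 ^ 2 = |∫ t in Ioi 0, exp (-t) * cos (θ t)| ^ 2 := by rw [hγ1, neg_sq, sq_abs]
      _ ≤ ((lam + 1) * exp (-lam)) ^ 2 := pow_le_pow_left₀ (abs_nonneg _)
          (abs_integral_exp_neg_mul_le_of_integral_exp_neg_two_mul_mul_sq hlam hcos hcos₁ hint) 2
      _ = (lam + 1) ^ 2 * exp (-2 * lam) := by rw [mul_pow, ← exp_nat_mul]; ring_nf
  have hγ2_eq : γ2 = γ1 ^ 2 - (2 * lam + 1) * exp (-2 * lam) + 1 / 2 := by
    rw [hγ2, integral_exp_neg_two_mul_mul_cos_two_mul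
      (integrableOn_exp_neg_two_mul_mul_sq_of_abs_le_one hcos hcos₁), hint]
    ring
  have hE : (2 * lam + 1) * exp (-2 * lam) ≤ 1 := by
    simpa only [neg_mul] using add_one_mul_exp_neg_le_one (2 * lam)
  have hγ2_sq : γ2 ^ 2 ≤ (lam ^ 2 * exp (-2 * lam) + 1 / 2) ^ 2 :=
    sq_le_sq' (by nlinarith [sq_nonneg γ1, mul_nonneg (sq_nonneg lam) (exp_pos (-2 * lam)).le])
      (by nlinarith)
  linarith

end
end

section
/- Define F : [0,∞) → ℝ by F(λ) = 2 (λ^2 e^{-2λ} + 1/2)^2 + (λ + 1)^2 e^{-2λ}. Then there is a unique λ_0 ∈ [0,∞) with 4 e^{-2λ_0}(λ_0^2 - λ_0^3) - 3 λ_0 + 1 = 0, F attains its maximum over [0,∞) at λ_0, F(λ_0) - 3/2 = 2 λ_0^4 e^{-4λ_0} + (3 λ_0^2 + 2 λ_0 + 1) e^{-2λ_0} - 1, and moreover 0.39004568 < λ_0 < 0.39004569 and 0.0348561 < F(λ_0) - 3/2 < 0.0348562. -/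
open MeasureTheory Filter Topology

noncomputable section

/-- The auxiliary function `F(λ) = 2(λ²e^{-2λ} + 1/2)² + (λ+1)²e^{-2λ}`. -/
def Fmilin (lam : ℝ) : ℝ :=
  2 * (lam ^ 2 * Real.exp (-2 * lam) + 1 / 2) ^ 2 + (lam + 1) ^ 2 * Real.exp (-2 * lam)



/-!
`F'(λ) = 2λ e^{-2λ} φ(λ)` with `φ(λ) = 4e^{-2λ}(λ² - λ³) - 3λ + 1`, and `φ` is strictly decreasing on
`[0, ∞)`: its derivative is `4e^{-2λ}λ(2λ² - 5λ + 2) - 3`, which is negative once `e^{2λ}` is bounded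
below by its Taylor polynomial of degree 4. So `φ` has at most one zero `λ₀ ≥ 0`, and `F` increases
up to `λ₀` and decreases after it. With `a = 0.39004568` and `b = a + 10⁻⁸`, a Taylor evaluation of
`e^{-2a}` gives `φ(a) > 0 > φ(b)`, which locates `λ₀` in `(a, b)`. Finally `F(a) ≤ F(λ₀)` by
monotonicity, and `F(λ₀) ≤ F(a) + φ(a)(λ₀ - a)` because `F' ≤ φ ≤ φ(a)` on `[a, λ₀]`.
-/

open Real Set

def milinCrit (l : ℝ) : ℝ := 4 * exp (-2 * l) * (l ^ 2 - l ^ 3) - 3 * l + 1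

lemma hasDerivAt_exp_neg_two_mul (l : ℝ) :
    HasDerivAt (fun t => exp (-2 * t)) (exp (-2 * l) * (-2)) l :=
  (hasDerivAt_exp _).comp l ((hasDerivAt_id l).const_mul (-2) |>.congr_deriv (mul_one _))

lemma hasDerivAt_milinCrit (l : ℝ) :
    HasDerivAt milinCrit (4 * exp (-2 * l) * (2 * l ^ 3 - 5 * l ^ 2 + 2 * l) - 3) l := by
  have hP : HasDerivAt (fun t => t ^ 2 - t ^ 3) (2 * l - 3 * l ^ 2) l :=
    ((hasDerivAt_pow 2 l).sub (hasDerivAt_pow 3 l)).congr_deriv (by norm_num)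
  have h := ((((hasDerivAt_exp_neg_two_mul l).const_mul 4).mul hP).sub
    ((hasDerivAt_id l).const_mul 3)).add_const 1
  exact h.congr_deriv (by ring)

lemma deriv_milinCrit_neg {l : ℝ} (hl : 0 < l) : deriv milinCrit l < 0 := by
  rw [(hasDerivAt_milinCrit l).deriv]
  have htaylor := sum_le_exp_of_nonneg (x := 2 * l) (by positivity) 5
  simp only [Finset.sum_range_succ, Finset.sum_range_zero] at htaylor
  norm_num [Nat.factorial] at htaylor
  have hinv : exp (-2 * l) * exp (2 * l) = 1 := by rw [← exp_add]; norm_num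
  -- `3 T(2l) - 4 (2l³ - 5l² + 2l)`, with `T` the degree-4 Taylor polynomial of `exp`
  have hpoly : 0 < 2 * l ^ 4 - 4 * l ^ 3 + 26 * l ^ 2 - 2 * l + 3 := by
    nlinarith [sq_nonneg (l * (l - 1)), sq_nonneg (12 * l - 1)]
  nlinarith [mul_pos (exp_pos (-2 * l)) hpoly, mul_le_mul_of_nonneg_left htaylor (exp_pos (-2 * l)).le]

lemma continuous_milinCrit : Continuous milinCrit :=
  continuous_iff_continuousAt.mpr fun l => (hasDerivAt_milinCrit l).continuousAt

lemma strictAntiOn_milinCrit : StrictAntiOn milinCrit (Ici 0) := by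
  refine strictAntiOn_of_deriv_neg (convex_Ici 0) continuous_milinCrit.continuousOn fun l hl => ?_
  rw [interior_Ici] at hl
  exact deriv_milinCrit_neg hl

lemma Fmilin_sub_three_halves (l : ℝ) :
    Fmilin l - 3 / 2 = 2 * l ^ 4 * exp (-4 * l) + (3 * l ^ 2 + 2 * l + 1) * exp (-2 * l) - 1 := by
  rw [show -4 * l = -2 * l + -2 * l by ring, exp_add, Fmilin]
  ring

lemma hasDerivAt_Fmilin (l : ℝ) : HasDerivAt Fmilin (2 * l * exp (-2 * l) * milinCrit l) l := by
  have hA : HasDerivAt (fun t => t ^ 2 * exp (-2 * t) + 1 / 2)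
      (2 * l * exp (-2 * l) + l ^ 2 * (exp (-2 * l) * (-2))) l :=
    (((hasDerivAt_pow 2 l).mul (hasDerivAt_exp_neg_two_mul l)).add_const _).congr_deriv (by norm_num)
  have hB : HasDerivAt (fun t => (t + 1) ^ 2) (2 * (l + 1)) l :=
    (((hasDerivAt_id l).add_const 1).pow 2).congr_deriv (by norm_num)
  have h := ((hA.pow 2).const_mul 2).add (hB.mul (hasDerivAt_exp_neg_two_mul l))
  exact h.congr_deriv (by simp only [milinCrit]; ring)

lemma two_mul_mul_exp_neg_two_mul_lt_one (l : ℝ) : 2 * l * exp (-2 * l) < 1 := by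
  have hinv : exp (2 * l) * exp (-2 * l) = 1 := by rw [← exp_add]; norm_num
  nlinarith [add_one_le_exp (2 * l), exp_pos (-2 * l)]

section Root

variable {l₀ : ℝ} (h₀ : 0 ≤ l₀) (hroot : milinCrit l₀ = 0)
include h₀ hroot

lemma milinCrit_pos_of_lt {l : ℝ} (hl : 0 ≤ l) (hlt : l < l₀) : 0 < milinCrit l :=
  hroot ▸ strictAntiOn_milinCrit hl h₀ hlt

lemma milinCrit_neg_of_gt {l : ℝ} (hgt : l₀ < l) : milinCrit l < 0 :=
  hroot ▸ strictAntiOn_milinCrit h₀ (h₀.trans hgt.le) hgt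

lemma eq_of_milinCrit_eq_zero {l : ℝ} (hl : 0 ≤ l) (hl0 : milinCrit l = 0) : l = l₀ :=
  strictAntiOn_milinCrit.injOn hl h₀ (hl0.trans hroot.symm)

lemma monotoneOn_Fmilin : MonotoneOn Fmilin (Icc 0 l₀) := by
  refine monotoneOn_of_hasDerivWithinAt_nonneg (convex_Icc 0 l₀)
    (fun l _ => (hasDerivAt_Fmilin l).continuousAt.continuousWithinAt)
    (fun l _ => (hasDerivAt_Fmilin l).hasDerivWithinAt) fun l hl => ?_
  rw [interior_Icc] at hl
  exact mul_nonneg (mul_nonneg (by linarith [hl.1]) (exp_pos _).le)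
    (milinCrit_pos_of_lt h₀ hroot hl.1.le hl.2).le

lemma antitoneOn_Fmilin : AntitoneOn Fmilin (Ici l₀) := by
  refine antitoneOn_of_hasDerivWithinAt_nonpos (convex_Ici l₀)
    (fun l _ => (hasDerivAt_Fmilin l).continuousAt.continuousWithinAt)
    (fun l _ => (hasDerivAt_Fmilin l).hasDerivWithinAt) fun l hl => ?_
  rw [interior_Ici] at hl
  exact mul_nonpos_of_nonneg_of_nonpos
    (mul_nonneg (by linarith [h₀, mem_Ioi.mp hl]) (exp_pos _).le)
    (milinCrit_neg_of_gt h₀ hroot hl).le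

lemma Fmilin_le (l : ℝ) (hl : 0 ≤ l) : Fmilin l ≤ Fmilin l₀ := by
  rcases le_total l l₀ with h | h
  · exact monotoneOn_Fmilin h₀ hroot ⟨hl, h⟩ ⟨h₀, le_rfl⟩ h
  · exact antitoneOn_Fmilin h₀ hroot self_mem_Ici h h

lemma Fmilin_sub_le {a : ℝ} (ha : 0 ≤ a) (hal : a ≤ l₀) :
    Fmilin l₀ - Fmilin a ≤ milinCrit a * (l₀ - a) := by
  refine (convex_Icc a l₀).image_sub_le_mul_sub_of_deriv_le
    (fun l _ => (hasDerivAt_Fmilin l).continuousAt.continuousWithinAt)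
    (fun l _ => (hasDerivAt_Fmilin l).differentiableAt.differentiableWithinAt)
    (fun l hl => ?_) a (left_mem_Icc.mpr hal) l₀ (right_mem_Icc.mpr hal) hal
  rw [interior_Icc] at hl
  have hl0 : 0 ≤ l := ha.trans hl.1.le
  have hpos := milinCrit_pos_of_lt h₀ hroot hl0 hl.2
  rw [(hasDerivAt_Fmilin l).deriv]
  calc 2 * l * exp (-2 * l) * milinCrit l ≤ milinCrit l := by
        nlinarith [two_mul_mul_exp_neg_two_mul_lt_one l]
    _ ≤ milinCrit a := (strictAntiOn_milinCrit ha hl0 hl.1).le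

end Root

lemma exp_neg_0_78009136_mem_Ioo : exp (-0.78009136) ∈ Ioo (0.4583641332 : ℝ) 0.4583641333 := by
  have h := Real.exp_bound (x := -0.78009136) (by norm_num [abs_le]) (n := 13) (by norm_num)
  simp only [Finset.sum_range_succ, Finset.sum_range_zero] at h
  norm_num [Nat.factorial, abs_le] at h
  constructor <;> linarith [h.1, h.2]

lemma milinCrit_0_39004568_mem_Ioc : milinCrit 0.39004568 ∈ Ioc 0 1e-9 := by
  obtain ⟨hlo, hhi⟩ := exp_neg_0_78009136_mem_Ioo
  rw [milinCrit, show -2 * (0.39004568 : ℝ) = -0.78009136 by norm_num]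
  constructor <;> nlinarith

lemma milinCrit_0_39004569_neg : milinCrit 0.39004569 < 0 := by
  have hle : exp (-2 * 0.39004569) ≤ exp (-0.78009136) := exp_le_exp.mpr (by norm_num)
  have hhi := exp_neg_0_78009136_mem_Ioo.2
  simp only [milinCrit]
  nlinarith

lemma Fmilin_0_39004568_sub_three_halves_mem_Ioo :
    Fmilin 0.39004568 - 3 / 2 ∈ Ioo 0.0348561 (0.0348562 - 1e-17) := by
  obtain ⟨hlo, hhi⟩ := exp_neg_0_78009136_mem_Ioo
  rw [Fmilin_sub_three_halves, show -4 * (0.39004568 : ℝ) = -0.78009136 + -0.78009136 by norm_num,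
    exp_add, show -2 * (0.39004568 : ℝ) = -0.78009136 by norm_num]
  constructor <;> nlinarith [mul_lt_mul'' hlo hlo (by norm_num) (by norm_num),
    mul_lt_mul'' hhi hhi (exp_pos _).le (exp_pos _).le]

/-- There is a unique zero `λ₀ ∈ [0,∞)` of `4e^{-2λ}(λ² - λ³) - 3λ + 1`; `F` attains its
maximum over `[0,∞)` at `λ₀`; `F(λ₀) - 3/2 = 2λ₀⁴e^{-4λ₀} + (3λ₀² + 2λ₀ + 1)e^{-2λ₀} - 1`;
and `0.39004568 < λ₀ < 0.39004569`, `0.0348561 < F(λ₀) - 3/2 < 0.0348562`. -/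
theorem Fmilin_max : ∃ lam0 : ℝ,
    (0 ≤ lam0 ∧ 4 * Real.exp (-2 * lam0) * (lam0 ^ 2 - lam0 ^ 3) - 3 * lam0 + 1 = 0) ∧
    (∀ lam : ℝ, 0 ≤ lam →
      4 * Real.exp (-2 * lam) * (lam ^ 2 - lam ^ 3) - 3 * lam + 1 = 0 → lam = lam0) ∧
    (∀ lam : ℝ, 0 ≤ lam → Fmilin lam ≤ Fmilin lam0) ∧
    (Fmilin lam0 - 3 / 2 =
      2 * lam0 ^ 4 * Real.exp (-4 * lam0) +
        (3 * lam0 ^ 2 + 2 * lam0 + 1) * Real.exp (-2 * lam0) - 1) ∧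
    (0.39004568 < lam0 ∧ lam0 < 0.39004569) ∧
    (0.0348561 < Fmilin lam0 - 3 / 2 ∧ Fmilin lam0 - 3 / 2 < 0.0348562) := by
  obtain ⟨hφa, hφa_small⟩ := milinCrit_0_39004568_mem_Ioc
  obtain ⟨l₀, ⟨hal, hlb⟩, hroot⟩ :=
    intermediate_value_Ioo' (by norm_num) continuous_milinCrit.continuousOn
      ⟨milinCrit_0_39004569_neg, hφa⟩
  have h₀ : 0 ≤ l₀ := by linarith
  obtain ⟨hFa_lo, hFa_hi⟩ := Fmilin_0_39004568_sub_three_halves_mem_Ioo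
  have hF_ge := monotoneOn_Fmilin h₀ hroot ⟨by norm_num, hal.le⟩ ⟨h₀, le_rfl⟩ hal.le
  have hF_le := Fmilin_sub_le h₀ hroot (by norm_num) hal.le
  have hgap : milinCrit 0.39004568 * (l₀ - 0.39004568) ≤ 1e-9 * 1e-8 :=
    mul_le_mul hφa_small (by linarith) (by linarith) (by norm_num)
  exact ⟨l₀, ⟨h₀, hroot⟩, fun l hl => eq_of_milinCrit_eq_zero h₀ hroot hl, Fmilin_le h₀ hroot,
    Fmilin_sub_three_halves l₀, ⟨hal, hlb⟩, by linarith, by linarith⟩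
end
end
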